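/- arXiv:2604.18894 — 3 statements merged into one kernel-verified Lean document; each statement's English description precedes it below -/
import Mathlib

section
/- Let A₁, …, A_k be linear isometric involutions of a finite-dimensional real inner product space V and let B = (1+A₁)∘⋯∘(1+A_k). Then every eigenvalue λ of B satisfies |λ| ≤ 2^k, and a vector v satisfies B v = 2^k v if and only if A_j v = v for all j = 1, …, k. -/
open scoped RealInnerProductSpace

section Aux

variable {V : Type*} [NormedAddCommGroup V] [InnerProductSpace ℝ V]

lemma aux_norm_one_add_le (A : V →L[ℝ] V) (h : ∀ v, ‖A v‖ = ‖v‖) (v : V) :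
    ‖(1 + A) v‖ ≤ 2 * ‖v‖ := by
  have : (1 + A) v = v + A v := by simp
  rw [this]
  calc ‖v + A v‖ ≤ ‖v‖ + ‖A v‖ := norm_add_le _ _
    _ = 2 * ‖v‖ := by rw [h]; ring

lemma aux_fix_of_norm_eq (A : V →L[ℝ] V) (h : ∀ v, ‖A v‖ = ‖v‖) (v : V)
    (he : ‖(1 + A) v‖ = 2 * ‖v‖) : A v = v := by
  by_cases hv : v = 0
  · simp [hv]
  have h1 : (1 + A) v = v + A v := by simp
  have h2 : ‖v + A v‖ ^ 2 = ‖v‖ ^ 2 + 2 * ⟪v, A v⟫ + ‖A v‖ ^ 2 := norm_add_sq_real v (A v)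
  rw [h1] at he
  have h3 : ⟪v, A v⟫ = ‖v‖ * ‖A v‖ := by
    have := h2
    rw [he, h v] at this
    rw [h v]
    nlinarith
  have h4 : ‖A v‖ • v = ‖v‖ • A v := (inner_eq_norm_mul_iff_real).1 h3
  rw [h v] at h4
  have hnv : ‖v‖ ≠ 0 := norm_ne_zero_iff.2 hv
  exact (smul_right_injective V hnv h4).symm

lemma aux_prod_bound (L : List (V →L[ℝ] V))
    (h : ∀ T ∈ L, ∀ v : V, ‖T v‖ ≤ 2 * ‖v‖) :
    ∀ v : V, ‖L.prod v‖ ≤ 2 ^ L.length * ‖v‖ := by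
  induction L with
  | nil => intro v; simp
  | cons a L ih =>
    intro v
    have hprod : (a :: L).prod v = a (L.prod v) := by
      simp [List.prod_cons, ContinuousLinearMap.mul_apply]
    rw [hprod]
    have h1 : ‖a (L.prod v)‖ ≤ 2 * ‖L.prod v‖ := h a (List.mem_cons_self) _
    have h2 : ‖L.prod v‖ ≤ 2 ^ L.length * ‖v‖ :=
      ih (fun T hT => h T (List.mem_cons_of_mem _ hT)) v
    calc ‖a (L.prod v)‖ ≤ 2 * ‖L.prod v‖ := h1
      _ ≤ 2 * (2 ^ L.length * ‖v‖) := by nlinarith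
      _ = 2 ^ (a :: L).length * ‖v‖ := by
          simp [List.length_cons, pow_succ]; ring

lemma aux_prod_fix (L : List (V →L[ℝ] V)) (v : V)
    (h : ∀ T ∈ L, T v = (2 : ℝ) • v) :
    L.prod v = (2 ^ L.length : ℝ) • v := by
  induction L with
  | nil => simp
  | cons a L ih =>
    have hprod : (a :: L).prod v = a (L.prod v) := by
      simp [List.prod_cons, ContinuousLinearMap.mul_apply]
    rw [hprod, ih (fun T hT => h T (List.mem_cons_of_mem _ hT)), map_smul,
      h a (List.mem_cons_self), smul_smul]
    rw [List.length_cons, pow_succ]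

lemma aux_prod_eq (L : List (V →L[ℝ] V))
    (h : ∀ T ∈ L, ∃ A : V →L[ℝ] V, T = 1 + A ∧ ∀ v, ‖A v‖ = ‖v‖) :
    ∀ v : V, L.prod v = (2 ^ L.length : ℝ) • v → ∀ T ∈ L, T v = (2 : ℝ) • v := by
  induction L with
  | nil => intro v _ T hT; simp at hT
  | cons a L ih =>
    intro v hv T hT
    set w := L.prod v with hw
    have hprod : (a :: L).prod v = a w := by
      simp [hw, List.prod_cons, ContinuousLinearMap.mul_apply]
    rw [hprod] at hv
    obtain ⟨Aa, haA, haIso⟩ := h a (List.mem_cons_self)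
    have hbound : ∀ T ∈ L, ∀ u : V, ‖T u‖ ≤ 2 * ‖u‖ := by
      intro T hT u
      obtain ⟨A', hA', hIso'⟩ := h T (List.mem_cons_of_mem _ hT)
      rw [hA']
      exact aux_norm_one_add_le A' hIso' u
    have hwle : ‖w‖ ≤ 2 ^ L.length * ‖v‖ := aux_prod_bound L hbound v
    have hawle : ‖a w‖ ≤ 2 * ‖w‖ := by
      rw [haA]; exact aux_norm_one_add_le Aa haIso w
    have hnorm_aw : ‖a w‖ = 2 ^ (L.length + 1) * ‖v‖ := by
      rw [hv, norm_smul]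
      simp [abs_of_nonneg (by positivity : (0:ℝ) ≤ (2:ℝ) ^ (L.length + 1))]
    have hlen : (a :: L).length = L.length + 1 := rfl
    have hweq : ‖w‖ = 2 ^ L.length * ‖v‖ := by
      rw [pow_succ] at hnorm_aw
      linarith
    have haw2 : ‖a w‖ = 2 * ‖w‖ := by rw [hweq, hnorm_aw, pow_succ]; ring
    have hfixw : Aa w = w := by
      apply aux_fix_of_norm_eq Aa haIso w
      rw [← haA]; exact haw2
    have haw_eq : a w = (2 : ℝ) • w := by
      rw [haA]; simp [two_smul]; exact hfixw
    have hweqv : w = (2 ^ L.length : ℝ) • v := by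
      have : (2 : ℝ) • w = (2 : ℝ) • ((2 ^ L.length : ℝ) • v) := by
        rw [← haw_eq, hv, smul_smul, hlen, pow_succ]; ring_nf
      exact smul_right_injective V (by norm_num : (2:ℝ) ≠ 0) this
    rcases List.mem_cons.1 hT with hTa | hTL
    · subst hTa
      have hfixv : Aa v = v := by
        have := hfixw
        rw [hweqv, map_smul] at this
        exact smul_right_injective V (by positivity : (2:ℝ) ^ L.length ≠ 0) this
      rw [haA]; simp [two_smul]; exact hfixv
    · exact ih (fun T hT => h T (List.mem_cons_of_mem _ hT)) v (hw.symm.trans hweqv) T hTL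

end Aux

/-- If `A₁, …, A_k` are linear isometric involutions of a finite-dimensional real inner
product space and `B = (1+A₁) ∘ ⋯ ∘ (1+A_k)`, then every eigenvalue `λ` of `B` satisfies
`|λ| ≤ 2^k`, and `B v = 2^k • v` iff `A_j v = v` for all `j`. -/
theorem eigenvalues_of_prod_one_add_involutions
    {V : Type*} [NormedAddCommGroup V] [InnerProductSpace ℝ V] [FiniteDimensional ℝ V]
    (k : ℕ) (A : Fin k → (V →L[ℝ] V))
    (hinv : ∀ j, ∀ v, A j (A j v) = v)
    (hiso : ∀ j, ∀ v w : V, ⟪A j v, A j w⟫ = ⟪v, w⟫)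
    (B : V →L[ℝ] V) (hB : B = (List.ofFn fun j => (1 + A j)).prod) :
    (∀ lam : ℝ, Module.End.HasEigenvalue (B : V →ₗ[ℝ] V) lam → |lam| ≤ 2 ^ k) ∧
      ∀ v : V, B v = (2 ^ k : ℝ) • v ↔ ∀ j, A j v = v := by
  have hnorm : ∀ j, ∀ v : V, ‖A j v‖ = ‖v‖ := by
    intro j v
    have := hiso j v v
    rw [real_inner_self_eq_norm_sq, real_inner_self_eq_norm_sq] at this
    nlinarith [norm_nonneg (A j v), norm_nonneg v]
  set L : List (V →L[ℝ] V) := List.ofFn fun j => (1 + A j) with hL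
  have hlen : L.length = k := by simp [hL]
  have hmem : ∀ T ∈ L, ∃ A' : V →L[ℝ] V, T = 1 + A' ∧ ∀ v, ‖A' v‖ = ‖v‖ := by
    intro T hT
    rw [hL, List.mem_ofFn] at hT
    obtain ⟨j, hj⟩ := hT
    exact ⟨A j, hj.symm, hnorm j⟩
  have hbound : ∀ T ∈ L, ∀ u : V, ‖T u‖ ≤ 2 * ‖u‖ := by
    intro T hT u
    obtain ⟨A', hA', hIso'⟩ := hmem T hT
    rw [hA']
    exact aux_norm_one_add_le A' hIso' u
  have hBnorm : ∀ v : V, ‖B v‖ ≤ 2 ^ k * ‖v‖ := by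
    intro v
    rw [hB]
    have := aux_prod_bound L hbound v
    rwa [hlen] at this
  constructor
  · intro lam hlam
    obtain ⟨v, hv⟩ := hlam.exists_hasEigenvector
    have hv0 : v ≠ 0 := hv.2
    have heq : B v = lam • v := hv.apply_eq_smul
    have : |lam| * ‖v‖ ≤ 2 ^ k * ‖v‖ := by
      have := hBnorm v
      rwa [heq, norm_smul, Real.norm_eq_abs] at this
    have hvn : 0 < ‖v‖ := norm_pos_iff.2 hv0
    exact le_of_mul_le_mul_right this hvn
  · intro v
    constructor
    · intro hv j
      have hBv : L.prod v = (2 ^ L.length : ℝ) • v := by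
        rw [hlen, ← hB]; exact hv
      have := aux_prod_eq L hmem v hBv (1 + A j)
        (by rw [hL, List.mem_ofFn]; exact ⟨j, rfl⟩)
      have h2 : v + A j v = (2 : ℝ) • v := by simpa using this
      have : A j v = (2 : ℝ) • v - v := by rw [← h2]; abel
      rw [this, two_smul]; abel
    · intro hfix
      have : ∀ T ∈ L, T v = (2 : ℝ) • v := by
        intro T hT
        rw [hL, List.mem_ofFn] at hT
        obtain ⟨j, hj⟩ := hT
        rw [← hj]
        simp [hfix j, two_smul]
      have := aux_prod_fix L v this
      rw [hlen, ← hB] at this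
      exact this
end

section
/- Let A₁, …, A_r ∈ ℝ^{d×d} be a family of matrices with no common invariant subspace other than 0 and ℝ^d. Then the set F = {A : A upper unitriangular, A⁻¹A_kA ≥ 0 entrywise for all k} is bounded (and hence compact) in ℝ^{d×d}. -/
open scoped Matrix.Norms.L2Operator
/-- A matrix is upper unitriangular if it is upper triangular with ones on the diagonal. -/
def UpperUnitriangular {d : ℕ} (A : Matrix (Fin d) (Fin d) ℝ) : Prop :=
  (∀ i, A i i = 1) ∧ ∀ i j : Fin d, j < i → A i j = 0

open scoped Matrix

variable {d r : ℕ} {A : Matrix (Fin d) (Fin d) ℝ}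


lemma euc_entry_le (y : Fin d → ℝ) (i : Fin d) :
    |y i| ≤ ‖(WithLp.equiv 2 (Fin d → ℝ)).symm y‖ := by
  rw [EuclideanSpace.norm_eq, ← Real.sqrt_sq_eq_abs]
  apply Real.sqrt_le_sqrt
  have : y i ^ 2 = ‖(WithLp.equiv 2 (Fin d → ℝ)).symm y i‖ ^ 2 := by
    rw [WithLp.equiv_symm_apply, PiLp.toLp_apply, Real.norm_eq_abs, sq_abs]
  rw [this]
  exact Finset.single_le_sum (f := fun j => ‖(WithLp.equiv 2 (Fin d → ℝ)).symm y j‖^2)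
    (fun j _ => by positivity) (Finset.mem_univ i)

lemma euc_norm_le_sum (y : Fin d → ℝ) :
    ‖(WithLp.equiv 2 (Fin d → ℝ)).symm y‖ ≤ ∑ i, |y i| := by
  rw [EuclideanSpace.norm_eq]
  rw [show (∑ i, |y i|) = Real.sqrt ((∑ i, |y i|)^2) by rw [Real.sqrt_sq (by positivity)]]
  apply Real.sqrt_le_sqrt
  have hy : ∀ j, ‖(WithLp.equiv 2 (Fin d → ℝ)).symm y j‖ = |y j| := fun j => by
    rw [WithLp.equiv_symm_apply, PiLp.toLp_apply, Real.norm_eq_abs]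
  calc ∑ i, ‖(WithLp.equiv 2 (Fin d → ℝ)).symm y i‖^2 ≤ ∑ i, |y i| * ∑ j, |y j| := by
        apply Finset.sum_le_sum
        intro i _
        rw [hy, sq]
        exact mul_le_mul_of_nonneg_left
          (Finset.single_le_sum (f := fun j => |y j|) (fun j _ => abs_nonneg _) (Finset.mem_univ i))
          (abs_nonneg _)
    _ = (∑ i, |y i|)^2 := by rw [← Finset.sum_mul, sq]

lemma mulVec_norm_le (A : Matrix (Fin d) (Fin d) ℝ) (x : Fin d → ℝ) :
    ‖(WithLp.equiv 2 (Fin d → ℝ)).symm (A.mulVec x)‖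
      ≤ ‖A‖ * ‖(WithLp.equiv 2 (Fin d → ℝ)).symm x‖ := by
  have := Matrix.l2_opNorm_mulVec A ((WithLp.equiv 2 (Fin d → ℝ)).symm x)
  simpa using this

lemma entry_le_opNorm (A : Matrix (Fin d) (Fin d) ℝ) (i j : Fin d) : |A i j| ≤ ‖A‖ := by
  have h := mulVec_norm_le A (Pi.single j 1)
  have hx : ‖(WithLp.equiv 2 (Fin d → ℝ)).symm (Pi.single j (1:ℝ))‖ = 1 := by
    have : (WithLp.equiv 2 (Fin d → ℝ)).symm (Pi.single j (1:ℝ))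
        = EuclideanSpace.single j (1:ℝ) := rfl
    rw [this, EuclideanSpace.norm_single]; norm_num
  have h2 : A.mulVec (Pi.single j 1) i = A i j := by
    simp [Matrix.mulVec_single]
  calc |A i j| = |A.mulVec (Pi.single j 1) i| := by rw [h2]
    _ ≤ ‖(WithLp.equiv 2 (Fin d → ℝ)).symm (A.mulVec (Pi.single j 1))‖ := euc_entry_le _ i
    _ ≤ ‖A‖ * ‖(WithLp.equiv 2 (Fin d → ℝ)).symm (Pi.single j (1:ℝ))‖ := h
    _ = ‖A‖ := by rw [hx, mul_one]

lemma opNorm_le_sum (A : Matrix (Fin d) (Fin d) ℝ) : ‖A‖ ≤ ∑ i, ∑ j, |A i j| := by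
  rw [Matrix.l2_opNorm_def]
  apply ContinuousLinearMap.opNorm_le_bound _ (by positivity)
  intro x
  have hx : ∀ j, |x j| ≤ ‖x‖ := by
    intro j
    have := euc_entry_le (d := d) (WithLp.equiv 2 (Fin d → ℝ) x) j
    simpa using this
  have key : ‖(WithLp.equiv 2 (Fin d → ℝ)).symm (A.mulVec (WithLp.equiv 2 (Fin d → ℝ) x))‖
      ≤ (∑ i, ∑ j, |A i j|) * ‖x‖ := by
    calc ‖(WithLp.equiv 2 (Fin d → ℝ)).symm (A.mulVec (WithLp.equiv 2 (Fin d → ℝ) x))‖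
        ≤ ∑ i, |A.mulVec (WithLp.equiv 2 (Fin d → ℝ) x) i| := euc_norm_le_sum _
      _ ≤ ∑ i, ∑ j, |A i j| * ‖x‖ := by
          apply Finset.sum_le_sum
          intro i _
          calc |A.mulVec (WithLp.equiv 2 (Fin d → ℝ) x) i|
              = |∑ j, A i j * x j| := by rfl
            _ ≤ ∑ j, |A i j * x j| := Finset.abs_sum_le_sum_abs _ _
            _ ≤ ∑ j, |A i j| * ‖x‖ := by
                apply Finset.sum_le_sum
                intro j _
                rw [abs_mul]
                exact mul_le_mul_of_nonneg_left (hx j) (abs_nonneg _)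
      _ = (∑ i, ∑ j, |A i j|) * ‖x‖ := by rw [Finset.sum_mul]; congr 1; ext i; rw [Finset.sum_mul]
  have : ((Matrix.toEuclideanLin.trans LinearMap.toContinuousLinearMap) A) x
      = (WithLp.equiv 2 (Fin d → ℝ)).symm (A.mulVec (WithLp.equiv 2 (Fin d → ℝ) x)) := rfl
  rw [this]
  exact key


lemma UT_det_eq_one (h : UpperUnitriangular A) : A.det = 1 := by
  rw [Matrix.det_of_upperTriangular (by intro i j hij; exact h.2 i j hij)]
  simp [h.1]

lemma UT_isUnit_det (h : UpperUnitriangular A) : IsUnit A.det := by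
  rw [UT_det_eq_one h]; exact isUnit_one

lemma UT_inv_mul (h : UpperUnitriangular A) : A⁻¹ * A = 1 :=
  Matrix.nonsing_inv_mul A (UT_isUnit_det h)

lemma UT_mul_inv (h : UpperUnitriangular A) : A * A⁻¹ = 1 :=
  Matrix.mul_nonsing_inv A (UT_isUnit_det h)

lemma UT_inv_diag (h : UpperUnitriangular A) (j : Fin d) : A⁻¹ j j = 1 := by
  rw [Matrix.inv_def, UT_det_eq_one h, Ring.inverse_one, one_smul, Matrix.adjugate_apply]
  have hUT : UpperUnitriangular (A.updateRow j (Pi.single j 1)) := by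
    constructor
    · intro i
      by_cases hi : i = j
      · subst hi; rw [Matrix.updateRow_self]; simp
      · rw [Matrix.updateRow_ne hi]; exact h.1 i
    · intro i k hk
      by_cases hi : i = j
      · subst hi
        rw [Matrix.updateRow_self]
        exact Pi.single_eq_of_ne (ne_of_lt hk) 1
      · rw [Matrix.updateRow_ne hi]; exact h.2 i k hk
  exact UT_det_eq_one hUT

lemma UT_inv_eq_adjugate (h : UpperUnitriangular A) : A⁻¹ = A.adjugate := by
  rw [Matrix.inv_def, UT_det_eq_one h, Ring.inverse_one, one_smul]

-- conjugation of monoid elements stays nonneg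
lemma conj_nonneg {As : Fin r → Matrix (Fin d) (Fin d) ℝ} (hA : UpperUnitriangular A)
    (h0 : ∀ k i j, 0 ≤ (A⁻¹ * As k * A) i j)
    {M : Matrix (Fin d) (Fin d) ℝ} (hM : M ∈ Submonoid.closure (Set.range As)) :
    ∀ i j, 0 ≤ (A⁻¹ * M * A) i j := by
  induction hM using Submonoid.closure_induction with
  | mem x hx => obtain ⟨k, rfl⟩ := hx; exact h0 k
  | one =>
      intro i j
      rw [mul_one, UT_inv_mul hA, Matrix.one_apply]
      split_ifs <;> norm_num
  | mul x y hx hy ihx ihy =>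
      intro i j
      have hxy : A⁻¹ * (x * y) * A = (A⁻¹ * x * A) * (A⁻¹ * y * A) := by
        have : (A⁻¹ * x * A) * (A⁻¹ * y * A) = A⁻¹ * x * (A * A⁻¹) * y * A := by
          noncomm_ring
        rw [this, UT_mul_inv hA, mul_one]
        noncomm_ring
      rw [hxy, Matrix.mul_apply]
      exact Finset.sum_nonneg fun l _ => mul_nonneg (ihx i l) (ihy l j)

lemma diag_le_trace {P : Matrix (Fin d) (Fin d) ℝ} (h : ∀ i j, 0 ≤ P i j) (i : Fin d) :
    P i i ≤ P.trace := by
  rw [Matrix.trace]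
  exact Finset.single_le_sum (f := fun i => P.diag i) (fun j _ => h j j) (Finset.mem_univ i)

lemma trace_conj (hA : UpperUnitriangular A) (M : Matrix (Fin d) (Fin d) ℝ) :
    (A⁻¹ * M * A).trace = M.trace := by
  rw [Matrix.trace_mul_cycle, UT_mul_inv hA, one_mul]

lemma dot_identity (M : Matrix (Fin d) (Fin d) ℝ) (j : Fin d) :
    (A⁻¹ j) ⬝ᵥ (M.mulVec fun l => A l j) = (A⁻¹ * M * A) j j := by
  simp only [dotProduct, Matrix.mulVec, Matrix.mul_apply, Finset.mul_sum,
    Finset.sum_mul, mul_assoc]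
  rw [Finset.sum_comm]

lemma key_bounds {As : Fin r → Matrix (Fin d) (Fin d) ℝ}
    (hA : UpperUnitriangular A) (h0 : ∀ k i j, 0 ≤ (A⁻¹ * As k * A) i j)
    {M : Matrix (Fin d) (Fin d) ℝ} (hM : M ∈ Submonoid.closure (Set.range As)) (j : Fin d) :
    0 ≤ (A⁻¹ j) ⬝ᵥ (M.mulVec fun l => A l j) ∧
      (A⁻¹ j) ⬝ᵥ (M.mulVec fun l => A l j) ≤ M.trace := by
  have hnn := conj_nonneg hA h0 hM
  rw [dot_identity]
  exact ⟨hnn j j, by rw [← trace_conj hA M]; exact diag_le_trace hnn j⟩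

lemma trace_nonneg_of_conj {As : Fin r → Matrix (Fin d) (Fin d) ℝ}
    (hA : UpperUnitriangular A) (h0 : ∀ k i j, 0 ≤ (A⁻¹ * As k * A) i j)
    {M : Matrix (Fin d) (Fin d) ℝ} (hM : M ∈ Submonoid.closure (Set.range As)) :
    0 ≤ M.trace := by
  have hnn := conj_nonneg hA h0 hM
  rw [← trace_conj hA M, Matrix.trace]
  exact Finset.sum_nonneg fun i _ => hnn i i


/-- If the family `A₁, …, A_r` has no common invariant subspace other than `0` and `ℝ^d`,
then the feasible region `F` of upper unitriangular matrices conjugating each `A_k` to an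
entrywise non-negative matrix is bounded, and hence compact. -/
theorem feasible_region_bounded_and_compact
    {d r : ℕ} (As : Fin r → Matrix (Fin d) (Fin d) ℝ)
    (hirr : ∀ W : Submodule ℝ (Fin d → ℝ),
      (∀ k, ∀ x ∈ W, (As k).mulVec x ∈ W) → W = ⊥ ∨ W = ⊤) :
    Bornology.IsBounded {A : Matrix (Fin d) (Fin d) ℝ |
        UpperUnitriangular A ∧ ∀ k, ∀ i j : Fin d, 0 ≤ (A⁻¹ * As k * A) i j} ∧
      IsCompact {A : Matrix (Fin d) (Fin d) ℝ |
        UpperUnitriangular A ∧ ∀ k, ∀ i j : Fin d, 0 ≤ (A⁻¹ * As k * A) i j} := by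
  set F := {A : Matrix (Fin d) (Fin d) ℝ |
      UpperUnitriangular A ∧ ∀ k, ∀ i j : Fin d, 0 ≤ (A⁻¹ * As k * A) i j} with hFdef
  have hBounded : Bornology.IsBounded F := by
    by_contra hUnb
    have hF : ∃ i0 j0 : Fin d, ∀ C : ℝ, ∃ A ∈ F, C < |A i0 j0| := by
      by_contra hcon
      push_neg at hcon
      choose C hC using hcon
      exact hUnb (isBounded_iff_forall_norm_le.2
        ⟨∑ i, ∑ j, C i j, fun A hA => le_trans (opNorm_le_sum A)
          (Finset.sum_le_sum fun i _ => Finset.sum_le_sum fun j _ => hC i j A hA)⟩)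
    obtain ⟨i0, j0, hF⟩ := hF
    choose g hgF hg using fun n : ℕ => hF n
    have hUTn : ∀ n, UpperUnitriangular (g n) := fun n => (hgF n).1
    set a : ℕ → (Fin d → ℝ) := fun n l => g n l j0 with ha
    set b : ℕ → (Fin d → ℝ) := fun n => (g n)⁻¹ j0 with hb
    have hα1 : ∀ n, (1:ℝ) ≤ ‖a n‖ := by
      intro n
      have h1 : a n j0 = 1 := (hUTn n).1 j0
      have := norm_le_pi_norm (a n) j0
      rw [h1] at this
      simpa using this
    have hαn : ∀ n : ℕ, (n:ℝ) < ‖a n‖ := by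
      intro n
      refine lt_of_lt_of_le (hg n) ?_
      have := norm_le_pi_norm (a n) i0
      simpa [ha] using this
    have hβ1 : ∀ n, (1:ℝ) ≤ ‖b n‖ := by
      intro n
      have h1 : b n j0 = 1 := UT_inv_diag (hUTn n) j0
      have := norm_le_pi_norm (b n) j0
      rw [h1] at this
      simpa using this
    have hαpos : ∀ n, (0:ℝ) < ‖a n‖ := fun n => lt_of_lt_of_le one_pos (hα1 n)
    have hβpos : ∀ n, (0:ℝ) < ‖b n‖ := fun n => lt_of_lt_of_le one_pos (hβ1 n)
    set u : ℕ → (Fin d → ℝ) := fun n => ‖a n‖⁻¹ • a n with hu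
    set v : ℕ → (Fin d → ℝ) := fun n => ‖b n‖⁻¹ • b n with hv
    have hu1 : ∀ n, ‖u n‖ = 1 := by
      intro n
      rw [hu, norm_smul, norm_inv, norm_norm, inv_mul_cancel₀ (ne_of_gt (hαpos n))]
    have hv1 : ∀ n, ‖v n‖ = 1 := by
      intro n
      rw [hv, norm_smul, norm_inv, norm_norm, inv_mul_cancel₀ (ne_of_gt (hβpos n))]
    have hball : Bornology.IsBounded
        ((Metric.closedBall (0:(Fin d → ℝ)) 1) ×ˢ (Metric.closedBall (0:(Fin d → ℝ)) 1)) :=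
      Metric.isBounded_closedBall.prod Metric.isBounded_closedBall
    have hmem : ∀ n, (u n, v n) ∈
        ((Metric.closedBall (0:(Fin d → ℝ)) 1) ×ˢ (Metric.closedBall (0:(Fin d → ℝ)) 1)) := by
      intro n
      constructor
      · rw [Metric.mem_closedBall, dist_zero_right, hu1 n]
      · rw [Metric.mem_closedBall, dist_zero_right, hv1 n]
    obtain ⟨⟨uL, vL⟩, -, φ, hφ, hconv⟩ := tendsto_subseq_of_bounded hball hmem
    have hconvu : Filter.Tendsto (fun n => u (φ n)) Filter.atTop (nhds uL) :=
      (continuous_fst.tendsto _).comp hconv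
    have hconvv : Filter.Tendsto (fun n => v (φ n)) Filter.atTop (nhds vL) :=
      (continuous_snd.tendsto _).comp hconv
    have huL : ‖uL‖ = 1 := by
      have h1 : Filter.Tendsto (fun n => ‖u (φ n)‖) Filter.atTop (nhds ‖uL‖) :=
        (continuous_norm.tendsto _).comp hconvu
      have h2 : Filter.Tendsto (fun n => ‖u (φ n)‖) Filter.atTop (nhds 1) := by
        simp only [hu1]; exact tendsto_const_nhds
      exact tendsto_nhds_unique h1 h2
    have hvL : ‖vL‖ = 1 := by
      have h1 : Filter.Tendsto (fun n => ‖v (φ n)‖) Filter.atTop (nhds ‖vL‖) :=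
        (continuous_norm.tendsto _).comp hconvv
      have h2 : Filter.Tendsto (fun n => ‖v (φ n)‖) Filter.atTop (nhds 1) := by
        simp only [hv1]; exact tendsto_const_nhds
      exact tendsto_nhds_unique h1 h2
    -- ‖a (φ n)‖ → ∞
    have hatop : Filter.Tendsto (fun n => ‖a (φ n)‖) Filter.atTop Filter.atTop := by
      apply Filter.tendsto_atTop_mono (f := fun n => ((n:ℕ):ℝ))
      · intro n
        exact le_trans (Nat.cast_le.2 (hφ.le_apply)) (le_of_lt (hαn (φ n)))
      · exact tendsto_natCast_atTop_atTop
    have hkey : ∀ M ∈ Submonoid.closure (Set.range As), vL ⬝ᵥ (M.mulVec uL) = 0 := by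
      intro M hM
      have htr : 0 ≤ M.trace := trace_nonneg_of_conj (hUTn 0) (hgF 0).2 hM
      have hbound : ∀ n, 0 ≤ v n ⬝ᵥ (M.mulVec (u n)) ∧
          v n ⬝ᵥ (M.mulVec (u n)) ≤ M.trace * ‖a n‖⁻¹ := by
        intro n
        have hkb := key_bounds (hUTn n) (hgF n).2 hM j0
        have heq : v n ⬝ᵥ (M.mulVec (u n))
            = ‖b n‖⁻¹ * (‖a n‖⁻¹ * ((b n) ⬝ᵥ (M.mulVec (a n)))) := by
          rw [hu, hv, Matrix.mulVec_smul, smul_dotProduct, dotProduct_smul]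
          simp [smul_eq_mul]
        rw [heq]
        have h1 : 0 ≤ (b n) ⬝ᵥ (M.mulVec (a n)) := hkb.1
        have h2 : (b n) ⬝ᵥ (M.mulVec (a n)) ≤ M.trace := hkb.2
        constructor
        · positivity
        · have hbinv : ‖b n‖⁻¹ ≤ 1 := by
            rw [inv_le_one_iff₀]; right; exact hβ1 n
          have step1 : ‖a n‖⁻¹ * ((b n) ⬝ᵥ (M.mulVec (a n))) ≤ ‖a n‖⁻¹ * M.trace :=
            mul_le_mul_of_nonneg_left h2 (le_of_lt (inv_pos.2 (hαpos n)))
          calc ‖b n‖⁻¹ * (‖a n‖⁻¹ * ((b n) ⬝ᵥ (M.mulVec (a n))))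
              ≤ 1 * (‖a n‖⁻¹ * ((b n) ⬝ᵥ (M.mulVec (a n)))) := by
                apply mul_le_mul_of_nonneg_right hbinv
                positivity
            _ = ‖a n‖⁻¹ * ((b n) ⬝ᵥ (M.mulVec (a n))) := one_mul _
            _ ≤ ‖a n‖⁻¹ * M.trace := step1
            _ = M.trace * ‖a n‖⁻¹ := mul_comm _ _
      have hlim : Filter.Tendsto (fun n => v (φ n) ⬝ᵥ (M.mulVec (u (φ n))))
          Filter.atTop (nhds (vL ⬝ᵥ (M.mulVec uL))) := by
        have hcont : Continuous (fun p : (Fin d → ℝ) × (Fin d → ℝ) => p.2 ⬝ᵥ (M.mulVec p.1)) :=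
          continuous_snd.dotProduct (continuous_const.matrix_mulVec continuous_fst)
        exact (hcont.tendsto _).comp hconv
      have hupper : Filter.Tendsto (fun n => M.trace * ‖a (φ n)‖⁻¹) Filter.atTop (nhds 0) := by
        have h0 : Filter.Tendsto (fun n => ‖a (φ n)‖⁻¹) Filter.atTop (nhds 0) :=
          hatop.inv_tendsto_atTop
        have := h0.const_mul M.trace
        simpa using this
      have hlim0 : Filter.Tendsto (fun n => v (φ n) ⬝ᵥ (M.mulVec (u (φ n))))
          Filter.atTop (nhds 0) := by
        apply tendsto_of_tendsto_of_tendsto_of_le_of_le tendsto_const_nhds hupper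
        · intro n; exact (hbound (φ n)).1
        · intro n; exact (hbound (φ n)).2
      exact tendsto_nhds_unique hlim hlim0
    have huL0 : uL ≠ 0 := by
      intro h; rw [h, norm_zero] at huL; norm_num at huL
    set W : Submodule ℝ (Fin d → ℝ) := Submodule.span ℝ
      ((fun M : Matrix (Fin d) (Fin d) ℝ => M.mulVec uL)
        '' ((Submonoid.closure (Set.range As) : Submonoid _) : Set _)) with hW
    have hWinv : ∀ k, ∀ x ∈ W, (As k).mulVec x ∈ W := by
      intro k x hx
      induction hx using Submodule.span_induction with
      | mem y hy =>
          obtain ⟨M, hM, rfl⟩ := hy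
          rw [Matrix.mulVec_mulVec]
          exact Submodule.subset_span
            ⟨As k * M, mul_mem (Submonoid.subset_closure ⟨k, rfl⟩) hM, rfl⟩
      | zero => rw [Matrix.mulVec_zero]; exact W.zero_mem
      | add y z hy hz ihy ihz => rw [Matrix.mulVec_add]; exact W.add_mem ihy ihz
      | smul c y hy ihy => rw [Matrix.mulVec_smul]; exact W.smul_mem c ihy
    have huW : uL ∈ W := Submodule.subset_span ⟨1, one_mem _, Matrix.one_mulVec uL⟩
    have hWtop : W = ⊤ := by
      rcases hirr W hWinv with h | h
      · exfalso; apply huL0; rw [h] at huW; simpa using huW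
      · exact h
    have hvW : vL ∈ W := by rw [hWtop]; trivial
    have horth : ∀ x ∈ W, vL ⬝ᵥ x = 0 := by
      intro x hx
      induction hx using Submodule.span_induction with
      | mem y hy => obtain ⟨M, hM, rfl⟩ := hy; exact hkey M hM
      | zero => exact dotProduct_zero vL
      | add y z hy hz ihy ihz => rw [dotProduct_add, ihy, ihz, add_zero]
      | smul c y hy ihy => rw [dotProduct_smul, ihy, smul_zero]
    have hvv : vL ⬝ᵥ vL = 0 := horth vL hvW
    have : vL = 0 := dotProduct_self_eq_zero.1 hvv
    rw [this, norm_zero] at hvL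
    norm_num at hvL
  have hClosed : IsClosed F := by
    have hFeq : F = {A : Matrix (Fin d) (Fin d) ℝ | UpperUnitriangular A} ∩
        {A : Matrix (Fin d) (Fin d) ℝ | ∀ k, ∀ i j : Fin d, 0 ≤ (A.adjugate * As k * A) i j} := by
      ext A
      constructor
      · rintro ⟨h1, h2⟩
        refine ⟨h1, fun k i j => ?_⟩
        rw [← UT_inv_eq_adjugate h1]
        exact h2 k i j
      · rintro ⟨h1, h2⟩
        refine ⟨h1, fun k i j => ?_⟩
        rw [UT_inv_eq_adjugate h1]
        exact h2 k i j
    rw [hFeq]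
    apply IsClosed.inter
    · have : {A : Matrix (Fin d) (Fin d) ℝ | UpperUnitriangular A} =
          (⋂ i : Fin d, {A : Matrix (Fin d) (Fin d) ℝ | A i i = 1}) ∩
          (⋂ i : Fin d, ⋂ j : Fin d, ⋂ _ : j < i, {A : Matrix (Fin d) (Fin d) ℝ | A i j = 0}) := by
        ext A
        simp only [Set.mem_setOf_eq, Set.mem_inter_iff, Set.mem_iInter, UpperUnitriangular]
      rw [this]
      apply IsClosed.inter
      · exact isClosed_iInter fun i =>
          isClosed_eq (continuous_id.matrix_elem i i) continuous_const
      · exact isClosed_iInter fun i => isClosed_iInter fun j => isClosed_iInter fun _ =>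
          isClosed_eq (continuous_id.matrix_elem i j) continuous_const
    · have : {A : Matrix (Fin d) (Fin d) ℝ | ∀ k, ∀ i j : Fin d, 0 ≤ (A.adjugate * As k * A) i j}
          = ⋂ k, ⋂ i, ⋂ j, {A : Matrix (Fin d) (Fin d) ℝ | 0 ≤ (A.adjugate * As k * A) i j} := by
        ext A
        simp only [Set.mem_setOf_eq, Set.mem_iInter]
      rw [this]
      refine isClosed_iInter fun k => isClosed_iInter fun i => isClosed_iInter fun j => ?_
      exact isClosed_le continuous_const
        (((continuous_id.matrix_adjugate.matrix_mul continuous_const).matrix_mul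
          continuous_id).matrix_elem i j)
  exact ⟨hBounded, Metric.isCompact_of_isClosed_isBounded hClosed hBounded⟩
end

section
/- Let K ⊆ 𝕊^{d-1} be a nonempty compact subset of the unit sphere in ℝ^d such that the convex cone C = cone(K) generated by K is pointed (C ∩ (−C) = {0}). If v₁, …, v_d ∈ K and x_n → x with each x_n a non-negative combination x_n = Σ_j λ_{n,j} v_j, then the coefficient sums Σ_j λ_{n,j} are bounded. -/
open scoped Topology

/-- The convex cone generated by a set `K`: all finite non-negative combinations of
elements of `K`. -/
def coneOf {E : Type*} [AddCommMonoid E] [Module ℝ E] (K : Set E) : Set E :=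
  {y | ∃ (m : ℕ) (a : Fin m → ℝ) (k : Fin m → E),
    (∀ i, 0 ≤ a i) ∧ (∀ i, k i ∈ K) ∧ y = ∑ i, a i • k i}

/-- If `K` is a nonempty compact subset of the unit sphere generating a pointed cone, and
`x_n = Σ_j λ_{n,j} v_j` (with `v_j ∈ K`, `λ_{n,j} ≥ 0`) converges, then the coefficient
sums `Σ_j λ_{n,j}` are bounded. -/
theorem coefficient_sums_bounded
    {d : ℕ} (K : Set (EuclideanSpace ℝ (Fin d)))
    (hKsphere : K ⊆ {x | ‖x‖ = 1}) (hKne : K.Nonempty) (hKcomp : IsCompact K)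
    (hpointed : ∀ y : EuclideanSpace ℝ (Fin d), y ∈ coneOf K → -y ∈ coneOf K → y = 0)
    (v : Fin d → EuclideanSpace ℝ (Fin d)) (hv : ∀ j, v j ∈ K)
    (lam : ℕ → Fin d → ℝ) (hlam : ∀ n j, 0 ≤ lam n j)
    (x : EuclideanSpace ℝ (Fin d))
    (hconv : Filter.Tendsto (fun n => ∑ j, lam n j • v j) Filter.atTop (𝓝 x)) :
    ∃ M : ℝ, ∀ n, (∑ j, lam n j) ≤ M := by
  by_contra h
  push_neg at h
  set S : ℕ → ℝ := fun n => ∑ j, lam n j with hS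
  choose nk hnk using fun k : ℕ => h ((k : ℝ) + 1)
  have hSk : ∀ k : ℕ, (k : ℝ) + 1 < S (nk k) := hnk
  have hSpos : ∀ k, 0 < S (nk k) := fun k =>
    lt_of_le_of_lt (by positivity) (hSk k)
  -- the sequence x_n is bounded in norm
  obtain ⟨B, hB⟩ : BddAbove (Set.range fun n => ‖∑ j, lam n j • v j‖) :=
    hconv.norm.bddAbove_range
  have hB' : ∀ n, ‖∑ j, lam n j • v j‖ ≤ B := fun n => hB ⟨n, rfl⟩
  have hB0 : 0 ≤ B := le_trans (norm_nonneg _) (hB' 0)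
  -- normalized coefficients
  set μseq : ℕ → Fin d → ℝ := fun k j => lam (nk k) j / S (nk k) with hμseq
  have hμmem : ∀ k, μseq k ∈ Set.pi Set.univ (fun _ : Fin d => Set.Icc (0:ℝ) 1) := by
    intro k j _
    constructor
    · exact div_nonneg (hlam _ _) (hSpos k).le
    · rw [div_le_one (hSpos k)]
      exact Finset.single_le_sum (fun i _ => hlam _ i) (Finset.mem_univ j)
  have hcomp : IsCompact (Set.pi Set.univ fun _ : Fin d => Set.Icc (0:ℝ) 1) :=
    isCompact_univ_pi fun _ => isCompact_Icc
  obtain ⟨μ, -, ψ, hψmono, hψtend⟩ := hcomp.tendsto_subseq hμmem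
  have hcoord : ∀ j, Filter.Tendsto (fun k => μseq (ψ k) j) Filter.atTop (𝓝 (μ j)) := by
    intro j
    exact (tendsto_pi_nhds.mp hψtend) j
  have hμnonneg : ∀ j, 0 ≤ μ j := by
    intro j
    exact le_of_tendsto_of_tendsto' tendsto_const_nhds (hcoord j)
      (fun k => (hμmem (ψ k) j (Set.mem_univ j)).1)
  -- coefficient sums of μseq are 1
  have hsum1 : ∀ k, ∑ j, μseq k j = 1 := by
    intro k
    simp only [hμseq, ← Finset.sum_div]
    exact div_self (hSpos k).ne'
  have hμsum : ∑ j, μ j = 1 := by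
    have h1 : Filter.Tendsto (fun k => ∑ j, μseq (ψ k) j) Filter.atTop (𝓝 (∑ j, μ j)) :=
      tendsto_finset_sum _ fun j _ => hcoord j
    have h2 : (fun k => ∑ j, μseq (ψ k) j) = fun _ => (1:ℝ) := funext fun k => hsum1 (ψ k)
    rw [h2] at h1
    exact tendsto_nhds_unique h1 tendsto_const_nhds
  -- normalized sums tend to 0
  have hw0 : Filter.Tendsto (fun k => ∑ j, μseq (ψ k) j • v j) Filter.atTop (𝓝 0) := by
    refine squeeze_zero_norm (f := fun k => ∑ j, μseq (ψ k) j • v j)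
        (a := fun k => B / ((k : ℝ) + 1)) ?_ ?_
    · intro k
      show ‖∑ j, μseq (ψ k) j • v j‖ ≤ B / ((k : ℝ) + 1)
      have heq : ∑ j, μseq (ψ k) j • v j = (S (nk (ψ k)))⁻¹ • ∑ j, lam (nk (ψ k)) j • v j := by
        rw [Finset.smul_sum]
        refine Finset.sum_congr rfl fun j _ => ?_
        rw [smul_smul]
        congr 1
        show lam (nk (ψ k)) j / S (nk (ψ k)) = (S (nk (ψ k)))⁻¹ * lam (nk (ψ k)) j
        rw [div_eq_inv_mul]
      rw [heq, norm_smul, norm_inv, Real.norm_eq_abs, abs_of_pos (hSpos (ψ k))]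
      rw [inv_mul_eq_div]
      apply div_le_div₀ hB0 (hB' _) (by positivity)
      calc (k : ℝ) + 1 ≤ (ψ k : ℝ) + 1 := by
            have h1 : k ≤ ψ k := hψmono.le_apply
            have h2 : (k : ℝ) ≤ (ψ k : ℝ) := Nat.cast_le.mpr h1
            linarith
        _ ≤ S (nk (ψ k)) := (hSk (ψ k)).le
    · have : Filter.Tendsto (fun k : ℕ => B / ((k : ℝ) + 1)) Filter.atTop (𝓝 0) := by
        apply Filter.Tendsto.div_atTop tendsto_const_nhds
        exact Filter.tendsto_atTop_add_const_right _ 1 tendsto_natCast_atTop_atTop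
      exact this
  have hlim : Filter.Tendsto (fun k => ∑ j, μseq (ψ k) j • v j) Filter.atTop
      (𝓝 (∑ j, μ j • v j)) :=
    tendsto_finset_sum _ fun j _ => (hcoord j).smul_const (v j)
  have hzero : ∑ j, μ j • v j = 0 := tendsto_nhds_unique hlim hw0
  -- find a positive coefficient
  obtain ⟨j0, hj0⟩ : ∃ j0, 0 < μ j0 := by
    by_contra hc
    push_neg at hc
    have : ∀ j, μ j = 0 := fun j => le_antisymm (hc j) (hμnonneg j)
    simp [this] at hμsum
  -- build the cone membership
  set y : EuclideanSpace ℝ (Fin d) := μ j0 • v j0 with hy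
  have hy1 : y ∈ coneOf K := by
    exact ⟨1, fun _ => μ j0, fun _ => v j0, fun _ => hj0.le, fun _ => hv j0, by simp [hy]⟩
  have hy2 : -y ∈ coneOf K := by
    refine ⟨d, fun j => if j = j0 then 0 else μ j, v, ?_, hv, ?_⟩
    · intro j; by_cases hj : j = j0 <;> simp [hj, hμnonneg j]
    · have hsplit : ∀ j : Fin d, μ j • v j =
          (if j = j0 then μ j0 else 0) • v j + (if j = j0 then 0 else μ j) • v j := by
        intro j; by_cases hj : j = j0 <;> simp [hj]
      have h1 : (∑ j, μ j • v j) =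
          (∑ j, (if j = j0 then μ j0 else 0) • v j) +
          ∑ j, (if j = j0 then 0 else μ j) • v j := by
        rw [← Finset.sum_add_distrib]
        exact Finset.sum_congr rfl fun j _ => hsplit j
      have h2 : (∑ j, (if j = j0 then μ j0 else 0) • v j) = μ j0 • v j0 := by
        simp [ite_smul, Finset.sum_ite_eq']
      rw [hzero] at h1
      rw [h2] at h1
      have := eq_neg_of_add_eq_zero_right h1.symm
      rw [hy]
      linear_combination (norm := module) -this
  have hyzero : y = 0 := hpointed y hy1 hy2
  have hv0 : ‖v j0‖ = 1 := hKsphere (hv j0)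
  rw [hy, smul_eq_zero] at hyzero
  rcases hyzero with h' | h'
  · exact hj0.ne' h'
  · rw [h', norm_zero] at hv0; norm_num at hv0
end
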